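/- For s ≥ 2, the set of s-core partitions is a single orbit under the action of the affine symmetric group generated by the operators s_i (i ∈ ℤ/sℤ), where s_i simultaneously adds all addable nodes of residue i and removes all removable nodes of residue i; moreover an s-core never has both addable and removable nodes of the same residue i. -/

import Mathlib

/-- A partition: a weakly decreasing sequence of non-negative integers,
with finitely many nonzero terms (indices are 0-based; `parts i` is `λ_{i+1}`). -/
structure Partition' where
  parts : ℕ → ℕ
  antitone : ∀ i j : ℕ, i ≤ j → parts j ≤ parts i
  finite_support : ∃ N : ℕ, ∀ i : ℕ, N ≤ i → parts i = 0

/-- The beta-set `B(λ) = {λ_a - a : a ≥ 1}` of a partition. -/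
def betaSet (lam : Partition') : Set ℤ :=
  Set.range fun i : ℕ => (lam.parts i : ℤ) - (i + 1)

/-- The shifted set `S + c`. -/
def shiftSet (S : Set ℤ) (c : ℤ) : Set ℤ := (fun x => x + c) '' S

/-- `λ` is an `s`-core (beta-set characterisation). -/
def IsCore (lam : Partition') (s : ℕ) : Prop :=
  ∀ x ∈ betaSet lam, x - (s : ℤ) ∈ betaSet lam

/-- Row `r` (0-based) of `λ` has an addable node, namely `(r, λ_r + 1)`. -/
def AddableAt (lam : Partition') (r : ℕ) : Prop :=
  r = 0 ∨ lam.parts r < lam.parts (r - 1)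

/-- Row `r` (0-based) of `λ` has a removable node, namely `(r, λ_r)`. -/
def RemovableAt (lam : Partition') (r : ℕ) : Prop :=
  lam.parts (r + 1) < lam.parts r

/-- The `s`-residue of the addable node in row `r`: `(λ_r + 1) - (r + 1) = λ_r - r`. -/
def addRes (s : ℕ) (lam : Partition') (r : ℕ) : ZMod s :=
  (((lam.parts r : ℤ) - r : ℤ) : ZMod s)

/-- The `s`-residue of the removable node in row `r`: `λ_r - (r + 1)`. -/
def remRes (s : ℕ) (lam : Partition') (r : ℕ) : ZMod s :=
  (((lam.parts r : ℤ) - (r + 1) : ℤ) : ZMod s)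

instance (lam : Partition') (r : ℕ) : Decidable (AddableAt lam r) := by
  unfold AddableAt; infer_instance

instance (lam : Partition') (r : ℕ) : Decidable (RemovableAt lam r) := by
  unfold RemovableAt; infer_instance

/-- `μ = s_i(λ)`: `μ` is obtained from `λ` by adding all addable nodes of residue
`i` and removing all removable nodes of residue `i`. -/
def SiRel (s : ℕ) (i : ZMod s) (lam mu : Partition') : Prop :=
  ∀ r : ℕ, mu.parts r =
    if AddableAt lam r ∧ addRes s lam r = i then lam.parts r + 1
    else if RemovableAt lam r ∧ remRes s lam r = i then lam.parts r - 1
    else lam.parts r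

/-- The empty partition. -/
def emptyPartition : Partition' :=
  ⟨fun _ => 0, fun _ _ _ => le_refl 0, ⟨0, fun _ _ => rfl⟩⟩

/-- Reachability from `lam` by repeatedly applying operators `s_i`. -/
inductive Reach (s : ℕ) : Partition' → Partition' → Prop
  | refl (lam : Partition') : Reach s lam lam
  | step {lam mu nu : Partition'} (i : ZMod s) :
      SiRel s i lam mu → Reach s mu nu → Reach s lam nu

/-!
Encode a partition by its beta-set `B(λ) = {λ_a - a}`. An addable `i`-node is a bead `x ≡ i - 1`
with `x + 1` free and a removable `i`-node is a bead `x ≡ i` with `x - 1` free, so `s_i` slides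
every bead across the residue classes `i - 1` and `i` whenever the target is free. For `s ≠ 1`
this says `B(s_i λ) = σ⁻¹ B(λ)`, where `σ` exchanges the two classes by `x ↦ x ± 1`; since `σ` is
an involution commuting with `x ↦ x - s`, `s_i` is an involution preserving `s`-cores.

The beta-set of an `s`-core is closed downwards inside each residue class, which rules out an
addable and a removable node of the same residue. So if `i` is the residue of a removable node
of a nonempty core, `s_i` only removes nodes, and induction on size reaches the empty partition.
-/

open Function Set

section MoveIfFree

variable {α : Type*}

open scoped Classical in
noncomputable def moveIfFree (σ : α → α) (B : Set α) (x : α) : α :=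
  if σ x ∈ B then x else σ x

theorem Function.Involutive.image_moveIfFree {σ : α → α} (hσ : Involutive σ) (B : Set α) :
    moveIfFree σ B '' B = σ ⁻¹' B := by
  ext y
  constructor
  · rintro ⟨x, hx, rfl⟩
    unfold moveIfFree
    split_ifs with h
    · exact h
    · simpa [hσ x] using hx
  · intro hy
    by_cases hyB : y ∈ B
    · exact ⟨y, hyB, if_pos hy⟩
    · exact ⟨σ y, hy, by simp [moveIfFree, hσ y, hyB]⟩

theorem Function.Involutive.moveIfFree_moveIfFree {σ : α → α} (hσ : Involutive σ)
    {B : Set α} {x : α} (hx : x ∈ B) :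
    moveIfFree σ (σ ⁻¹' B) (moveIfFree σ B x) = x := by
  by_cases h : σ x ∈ B <;> simp [moveIfFree, h, hσ x, hx]

end MoveIfFree

theorem moveIfFree_strictMonoOn {σ : ℤ → ℤ} (hσ : Injective σ) (hσ_near : ∀ x, |σ x - x| ≤ 1)
    (B : Set ℤ) : StrictMonoOn (moveIfFree σ B) B := by
  intro x hx y hy hxy
  have hx_near := abs_le.mp (hσ_near x)
  have hy_near := abs_le.mp (hσ_near y)
  have hne : σ x ≠ σ y := hσ.ne hxy.ne
  unfold moveIfFree
  split_ifs with hxB hyB hyB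
  · exact hxy
  · have : σ y ≠ x := fun h => hyB (h ▸ hx)
    omega
  · have : σ x ≠ y := fun h => hxB (h ▸ hy)
    omega
  · have : σ y ≠ x := fun h => hyB (h ▸ hx)
    have : σ x ≠ y := fun h => hxB (h ▸ hy)
    omega

theorem StrictAnti.succ_eq_of_apply_eq_add_one {f : ℕ → ℤ} (hf : StrictAnti f) {q r : ℕ}
    (h : f q = f r + 1) : q + 1 = r := by
  have hqr : q < r := hf.lt_iff_gt.mp (by omega)
  by_contra hne
  have := hf (show q + 1 < r by omega)
  have := hf (Nat.lt_add_one q)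
  omega

section ResSwap

variable {s : ℕ}

def resSwap (s : ℕ) (i : ZMod s) (x : ℤ) : ℤ :=
  if ((x + 1 : ℤ) : ZMod s) = i then x + 1 else if (x : ZMod s) = i then x - 1 else x

theorem resSwap_of_cast_add_one_eq {i : ZMod s} {x : ℤ} (h : ((x + 1 : ℤ) : ZMod s) = i) :
    resSwap s i x = x + 1 :=
  if_pos h

theorem resSwap_of_cast_eq (hs : s ≠ 1) {i : ZMod s} {x : ℤ} (h : (x : ZMod s) = i) :
    resSwap s i x = x - 1 := by
  have h1 : (1 : ZMod s) ≠ 0 := mt ZMod.one_eq_zero_iff.mp hs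
  refine (if_neg fun h' => h1 ?_).trans (if_pos h)
  push_cast at h'
  linear_combination h' - h

theorem resSwap_involutive (hs : s ≠ 1) (i : ZMod s) : Involutive (resSwap s i) := by
  intro x
  by_cases h : ((x + 1 : ℤ) : ZMod s) = i
  · rw [resSwap_of_cast_add_one_eq h, resSwap_of_cast_eq hs h, add_sub_cancel_right]
  by_cases h' : (x : ZMod s) = i
  · rw [resSwap_of_cast_eq hs h', resSwap_of_cast_add_one_eq (by rwa [sub_add_cancel]),
      sub_add_cancel]
  · simp only [resSwap, if_neg h, if_neg h']

theorem resSwap_sub_natCast (i : ZMod s) (x : ℤ) : resSwap s i (x - s) = resSwap s i x - s := by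
  simp only [resSwap]
  push_cast
  simp only [ZMod.natCast_self, sub_zero]
  split_ifs <;> ring

theorem abs_resSwap_sub_le (i : ZMod s) (x : ℤ) : |resSwap s i x - x| ≤ 1 := by
  unfold resSwap
  split_ifs <;> simp

end ResSwap

namespace Partition'

def beta (lam : Partition') (r : ℕ) : ℤ := (lam.parts r : ℤ) - (r + 1)

theorem betaSet_eq_range (lam : Partition') : betaSet lam = range lam.beta := rfl

theorem beta_mem_betaSet (lam : Partition') (r : ℕ) : lam.beta r ∈ betaSet lam := ⟨r, rfl⟩

theorem beta_strictAnti (lam : Partition') : StrictAnti lam.beta :=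
  strictAnti_nat_of_succ_lt fun r => by
    have := lam.antitone r (r + 1) (Nat.le_succ r)
    unfold beta
    push_cast
    omega

theorem addableAt_iff (lam : Partition') (r : ℕ) :
    AddableAt lam r ↔ lam.beta r + 1 ∉ betaSet lam := by
  constructor
  · rintro h ⟨q, hq : lam.beta q = _⟩
    obtain rfl := lam.beta_strictAnti.succ_eq_of_apply_eq_add_one hq
    rcases h with h | h
    · omega
    · simp only [add_tsub_cancel_right] at h
      unfold beta at hq
      omega
  · intro h
    rcases r with _ | q
    · exact Or.inl rfl
    · refine Or.inr (lt_of_le_of_ne (lam.antitone _ _ (Nat.le_succ q)) fun heq => h ⟨q, ?_⟩)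
      simp only [beta, add_tsub_cancel_right] at heq ⊢
      push_cast
      omega

theorem removableAt_iff (lam : Partition') (r : ℕ) :
    RemovableAt lam r ↔ lam.beta r - 1 ∉ betaSet lam := by
  constructor
  · rintro h ⟨q, hq : lam.beta q = _⟩
    obtain rfl := lam.beta_strictAnti.succ_eq_of_apply_eq_add_one (q := r) (r := q) (by omega)
    unfold RemovableAt at h
    unfold beta at hq
    omega
  · intro h
    refine lt_of_le_of_ne (lam.antitone _ _ (Nat.le_succ r)) fun heq => h ⟨r + 1, ?_⟩
    unfold beta
    push_cast
    omega

theorem addRes_eq (s : ℕ) (lam : Partition') (r : ℕ) :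
    addRes s lam r = ((lam.beta r + 1 : ℤ) : ZMod s) := by
  unfold addRes beta
  push_cast
  ring

theorem remRes_eq (s : ℕ) (lam : Partition') (r : ℕ) :
    remRes s lam r = (lam.beta r : ZMod s) := by
  unfold remRes beta
  push_cast
  ring

theorem exists_removableAt {lam : Partition'} {k : ℕ} (hk : lam.parts k ≠ 0) :
    ∃ r, RemovableAt lam r := by
  by_contra! h
  obtain ⟨N, hN⟩ := lam.finite_support
  have hmono : Monotone lam.parts := monotone_nat_of_le_succ fun r => not_lt.mp (h r)
  have := hmono (le_max_left k N)
  have := hN _ (le_max_right k N)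
  omega

theorem eq_emptyPartition {lam : Partition'} (h : ∀ r, lam.parts r = 0) :
    lam = emptyPartition := by
  obtain ⟨parts, _, _⟩ := lam
  obtain rfl : parts = fun _ => 0 := funext h
  rfl

end Partition'

open Partition'

section SiRel

variable {s : ℕ} {i : ZMod s} {lam mu : Partition'}

def siParts (s : ℕ) (i : ZMod s) (lam : Partition') (r : ℕ) : ℕ :=
  if AddableAt lam r ∧ addRes s lam r = i then lam.parts r + 1
  else if RemovableAt lam r ∧ remRes s lam r = i then lam.parts r - 1
  else lam.parts r

theorem siParts_sub_eq_moveIfFree (hs : s ≠ 1) (i : ZMod s) (lam : Partition') (r : ℕ) :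
    (siParts s i lam r : ℤ) - (r + 1) = moveIfFree (resSwap s i) (betaSet lam) (lam.beta r) := by
  have hA : AddableAt lam r ∧ addRes s lam r = i ↔
      lam.beta r + 1 ∉ betaSet lam ∧ ((lam.beta r + 1 : ℤ) : ZMod s) = i := by
    rw [addableAt_iff, addRes_eq]
  have hR : RemovableAt lam r ∧ remRes s lam r = i ↔
      lam.beta r - 1 ∉ betaSet lam ∧ (lam.beta r : ZMod s) = i := by
    rw [removableAt_iff, remRes_eq]
  have hpos : lam.beta r - 1 ∉ betaSet lam → 1 ≤ lam.parts r := fun h =>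
    Nat.one_le_of_lt ((removableAt_iff lam r).mpr h)
  have hbeta : lam.beta r = (lam.parts r : ℤ) - (r + 1) := rfl
  have hne : ((lam.beta r + 1 : ℤ) : ZMod s) ≠ (lam.beta r : ZMod s) := by
    push_cast
    intro h
    exact mt ZMod.one_eq_zero_iff.mp hs (by linear_combination h)
  unfold siParts moveIfFree
  by_cases hadd : ((lam.beta r + 1 : ℤ) : ZMod s) = i
  · have hrem : (lam.beta r : ZMod s) ≠ i := fun h => hne (hadd.trans h.symm)
    rw [resSwap_of_cast_add_one_eq hadd]
    split_ifs <;> grind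
  by_cases hrem : (lam.beta r : ZMod s) = i
  · rw [resSwap_of_cast_eq hs hrem]
    split_ifs <;> grind
  · rw [resSwap, if_neg hadd, if_neg hrem, if_pos (lam.beta_mem_betaSet r)]
    split_ifs <;> grind

theorem SiRel.beta_eq (hs : s ≠ 1) (h : SiRel s i lam mu) (r : ℕ) :
    mu.beta r = moveIfFree (resSwap s i) (betaSet lam) (lam.beta r) := by
  rw [← siParts_sub_eq_moveIfFree hs, beta, h r]
  rfl

theorem siRel_of_beta_eq (hs : s ≠ 1)
    (h : ∀ r, mu.beta r = moveIfFree (resSwap s i) (betaSet lam) (lam.beta r)) :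
    SiRel s i lam mu := fun r => by
  have hsi := siParts_sub_eq_moveIfFree hs i lam r
  have hmu := h r
  show mu.parts r = siParts s i lam r
  rw [beta] at hmu
  omega

theorem SiRel.betaSet_eq (hs : s ≠ 1) (h : SiRel s i lam mu) :
    betaSet mu = resSwap s i ⁻¹' betaSet lam := by
  rw [betaSet_eq_range, funext (h.beta_eq hs), range_comp', ← betaSet_eq_range,
    (resSwap_involutive hs i).image_moveIfFree]

theorem SiRel.symm (hs : s ≠ 1) (h : SiRel s i lam mu) : SiRel s i mu lam :=
  siRel_of_beta_eq hs fun r => by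
    rw [h.betaSet_eq hs, h.beta_eq hs,
      (resSwap_involutive hs i).moveIfFree_moveIfFree (lam.beta_mem_betaSet r)]

theorem siParts_eq_zero {N : ℕ} (hN : ∀ r, N ≤ r → lam.parts r = 0) {r : ℕ} (hr : N < r) :
    siParts s i lam r = 0 := by
  have h0 := hN r hr.le
  have hA : ¬AddableAt lam r := by
    have := hN (r - 1) (by omega)
    unfold AddableAt
    omega
  have hR : ¬RemovableAt lam r := by
    unfold RemovableAt
    omega
  simp [siParts, hA, hR, h0]

theorem exists_siRel (hs : s ≠ 1) (i : ZMod s) (lam : Partition') : ∃ mu, SiRel s i lam mu := by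
  have hanti : StrictAnti fun r => (siParts s i lam r : ℤ) - (r + 1) := fun a b hab => by
    simp only [siParts_sub_eq_moveIfFree hs]
    exact moveIfFree_strictMonoOn (resSwap_involutive hs i).injective (abs_resSwap_sub_le i) _
      (lam.beta_mem_betaSet b) (lam.beta_mem_betaSet a) (lam.beta_strictAnti hab)
  have hmono : Antitone (siParts s i lam) := antitone_nat_of_succ_le fun r => by
    have := hanti (Nat.lt_add_one r)
    push_cast at this
    omega
  obtain ⟨N, hN⟩ := lam.finite_support
  exact ⟨⟨siParts s i lam, fun _ _ hab => hmono hab, N + 1, fun r hr => siParts_eq_zero hN hr⟩,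
    fun _ => rfl⟩

theorem IsCore.siRel (hs : s ≠ 1) (hc : IsCore lam s) (h : SiRel s i lam mu) : IsCore mu s := by
  intro x hx
  rw [h.betaSet_eq hs, mem_preimage] at hx ⊢
  rw [resSwap_sub_natCast]
  exact hc _ hx

theorem SiRel.parts_le (h : SiRel s i lam mu) (hA : ∀ r, ¬(AddableAt lam r ∧ addRes s lam r = i))
    (q : ℕ) : mu.parts q ≤ lam.parts q := by
  rw [h q, if_neg (hA q)]
  split_ifs <;> omega

theorem SiRel.parts_lt (h : SiRel s i lam mu) (hA : ∀ r, ¬(AddableAt lam r ∧ addRes s lam r = i))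
    {r : ℕ} (hR : RemovableAt lam r) (hi : remRes s lam r = i) : mu.parts r < lam.parts r := by
  rw [h r, if_neg (hA r), if_pos ⟨hR, hi⟩]
  unfold RemovableAt at hR
  omega

end SiRel

section Core

variable {s : ℕ} {lam : Partition'}

theorem IsCore.sub_mul_mem (hc : IsCore lam s) {x : ℤ} (hx : x ∈ betaSet lam) (k : ℕ) :
    x - k * s ∈ betaSet lam := by
  induction k with
  | zero => simpa using hx
  | succ k ih =>
    convert hc _ ih using 1
    push_cast
    ring

theorem IsCore.mem_of_cast_eq (hc : IsCore lam s) {x y : ℤ} (hx : x ∈ betaSet lam)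
    (hxy : (y : ZMod s) = x) (hle : y ≤ x) : y ∈ betaSet lam := by
  obtain ⟨k, hk⟩ := (ZMod.intCast_eq_intCast_iff_dvd_sub y x s).mp hxy
  have hks : (k.toNat : ℤ) * s = x - y := by
    rcases le_or_gt 0 k with hk0 | hk0
    · rw [Int.toNat_of_nonneg hk0, hk, mul_comm]
    · have : (s : ℤ) = 0 := by nlinarith
      rw [hk, this, mul_zero, zero_mul]
  have := hc.sub_mul_mem hx k.toNat
  rwa [hks, sub_sub_cancel] at this

theorem IsCore.not_addable_and_removable (hc : IsCore lam s) (i : ZMod s) :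
    ¬((∃ r, AddableAt lam r ∧ addRes s lam r = i) ∧
      (∃ r, RemovableAt lam r ∧ remRes s lam r = i)) := by
  rintro ⟨⟨r, hA, hAi⟩, ⟨q, hR, hRi⟩⟩
  rw [addableAt_iff] at hA
  rw [removableAt_iff] at hR
  rw [addRes_eq] at hAi
  rw [remRes_eq] at hRi
  have hlt : lam.beta q < lam.beta r + 1 := by
    by_contra! hle
    exact hA (hc.mem_of_cast_eq (lam.beta_mem_betaSet q) (hAi.trans hRi.symm) hle)
  have hgt : lam.beta r < lam.beta q - 1 := by
    by_contra! hle
    refine hR (hc.mem_of_cast_eq (lam.beta_mem_betaSet r) ?_ hle)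
    push_cast at hAi ⊢
    linear_combination hRi - hAi
  omega

end Core

theorem isCore_emptyPartition (s : ℕ) : IsCore emptyPartition s := by
  rintro _ ⟨r, rfl⟩
  refine ⟨r + s, ?_⟩
  simp only [emptyPartition, Nat.cast_zero, Nat.cast_add]
  ring

theorem Reach.tail {s : ℕ} {i : ZMod s} {a b c : Partition'} (hab : Reach s a b)
    (hbc : SiRel s i b c) : Reach s a c := by
  induction hab with
  | refl => exact .step i hbc (.refl c)
  | step j hj _ ih => exact .step j hj (ih hbc)

theorem Reach.isCore {s : ℕ} (hs : s ≠ 1) {a b : Partition'} (hab : Reach s a b)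
    (ha : IsCore a s) : IsCore b s := by
  induction hab with
  | refl => exact ha
  | step _ hj _ ih => exact ih (ha.siRel hs hj)

theorem IsCore.reach {s : ℕ} (hs : s ≠ 1) {lam : Partition'} (hc : IsCore lam s) :
    Reach s emptyPartition lam := by
  obtain ⟨N, hN⟩ := lam.finite_support
  induction hn : ∑ r ∈ Finset.range N, lam.parts r using Nat.strong_induction_on
    generalizing lam with
  | _ n ih =>
  by_cases hzero : ∀ r, lam.parts r = 0
  · rw [eq_emptyPartition hzero]
    exact .refl _
  push Not at hzero
  obtain ⟨k, hk⟩ := hzero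
  obtain ⟨r, hr⟩ := exists_removableAt hk
  obtain ⟨mu, hmu⟩ := exists_siRel hs (remRes s lam r) lam
  have hA : ∀ q, ¬(AddableAt lam q ∧ addRes s lam q = remRes s lam r) := fun q hq =>
    hc.not_addable_and_removable _ ⟨⟨q, hq⟩, ⟨r, hr, rfl⟩⟩
  have hle := hmu.parts_le hA
  have hlt := hmu.parts_lt hA hr rfl
  have hrN : r < N := by
    by_contra! h
    have := hN r h
    omega
  have hsum : ∑ q ∈ Finset.range N, mu.parts q < n :=
    hn ▸ Finset.sum_lt_sum (fun q _ => hle q) ⟨r, Finset.mem_range.mpr hrN, hlt⟩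
  have hmuN : ∀ q, N ≤ q → mu.parts q = 0 := fun q hq => by
    have := hle q
    have := hN q hq
    omega
  exact (ih _ hsum (hc.siRel hs hmu) hmuN rfl).tail (hmu.symm hs)

/-- for `s ≥ 2`, (1) an `s`-core never has both an addable and a
removable node of the same residue `i`; (2) applying `s_i` to an `s`-core yields
an `s`-core; (3) the set of `s`-cores is precisely the orbit of the empty
partition under the operators `s_i`. -/
theorem stmt_17 (s : ℕ) (hs : 2 ≤ s) :
    (∀ lam : Partition', IsCore lam s → ∀ i : ZMod s,
      ¬((∃ r, AddableAt lam r ∧ addRes s lam r = i) ∧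
        (∃ r, RemovableAt lam r ∧ remRes s lam r = i))) ∧
    (∀ (lam mu : Partition') (i : ZMod s),
      IsCore lam s → SiRel s i lam mu → IsCore mu s) ∧
    (∀ lam : Partition', IsCore lam s ↔ Reach s emptyPartition lam) := by
  have hs1 : s ≠ 1 := by omega
  exact ⟨fun _ hc => hc.not_addable_and_removable,
    fun _ _ _ hc h => hc.siRel hs1 h,
    fun _ => ⟨fun hc => hc.reach hs1, fun h => h.isCore hs1 (isCore_emptyPartition s)⟩⟩
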